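/- Let k ≥ 1 and let (Q_1, …, Q_n) be a critical fit sequence of a finite weighted set P (weights in {0,…,k−1}, each w(Q_j) < k, no two consecutive non-jumps). If the landmarks of the sequence are 0 = q_1 < q_2 < … < q_ℓ ≤ ⌊w(P)/k⌋, then ℓ = n − ⌊w(P)/k⌋, and for every r ∈ [ℓ], the partial sum satisfies q_r·k ≤ w(Q_1 ∪ … ∪ Q_{q_r + r}) < (q_r + 1)·k. -/

import Mathlib

open Finset

/-!
Write `f m = ⌊w_m / k⌋`. Every term weighs less than `k`, so `f` rises by at most one per
step and therefore `f m + #{non-jumps among 1, …, m} = m`. Because no two non-jumps are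
adjacent, the step right after a non-jump is a jump, so `f` is strictly increasing on the
non-jumps. Hence the landmarks enumerate the non-jumps in increasing order: the `r`-th
non-jump `j` has `f j = q_r` and exactly `r` non-jumps up to it, so `j = q_r + r`, and
`ℓ` is the number of non-jumps, `n - ⌊w(P)/k⌋`.
-/

/-- The weight of the union of the first `m` terms of the sequence `Q`. -/
def partialW {V : Type*} (w : V → ℕ) {n : ℕ} (Q : Fin n → Finset V) (m : ℕ) : ℕ :=
  ∑ i ∈ Finset.univ.filter (fun i : Fin n => (i : ℕ) < m), ∑ v ∈ Q i, w v

/-- The `j`-th term (`1 ≤ j ≤ n`) is a non-jump: the floor of the partial weight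
divided by `k` does not increase at step `j`. -/
def NonJump {V : Type*} (k : ℕ) (w : V → ℕ) {n : ℕ} (Q : Fin n → Finset V)
    (j : ℕ) : Prop :=
  partialW w Q j / k = partialW w Q (j - 1) / k

lemma Nat.div_eq_or_eq_add_one_of_le_of_lt_add {a b k : ℕ} (hab : a ≤ b) (hb : b < a + k) :
    b / k = a / k ∨ b / k = a / k + 1 := by
  have hk : 0 < k := by omega
  have hlo : a / k ≤ b / k := Nat.div_le_div_right hab
  have hhi : b / k ≤ a / k + 1 :=
    Nat.add_div_right a hk ▸ Nat.div_le_div_right (by omega)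
  omega

section UnitSteps

variable {f : ℕ → ℕ}

lemma add_card_filter_flat_eq (hstep : ∀ m, f (m + 1) = f m ∨ f (m + 1) = f m + 1) (m : ℕ) :
    f m + #{j ∈ Icc 1 m | f j = f (j - 1)} = f 0 + m := by
  induction m with
  | zero => simp
  | succ m ih =>
    rw [← insert_Icc_right_eq_Icc_add_one (by omega), filter_insert, Nat.add_sub_cancel]
    rcases hstep m with h | h
    · rw [if_pos h, card_insert_of_notMem (by simp)]
      omega
    · rw [if_neg (by omega)]
      omega

lemma strictMonoOn_filter_flat (hstep : ∀ m, f (m + 1) = f m ∨ f (m + 1) = f m + 1) {n : ℕ}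
    (hsep : ∀ j, 1 ≤ j → j + 1 ≤ n → ¬ (f j = f (j - 1) ∧ f (j + 1) = f j)) :
    StrictMonoOn f ({j ∈ Icc 1 n | f j = f (j - 1)} : Finset ℕ) := by
  intro a ha b hb hab
  simp only [mem_coe, mem_filter, mem_Icc] at ha hb
  have hmono : Monotone f := monotone_nat_of_le_succ fun m => by rcases hstep m with h | h <;> omega
  have hjump : f (a + 1) = f a + 1 :=
    (hstep a).resolve_left fun h => hsep a ha.1.1 (by omega) ⟨ha.2, h⟩
  have := hmono (show a + 1 ≤ b by omega)
  omega

end UnitSteps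

section Enumeration

variable {α β : Type*} {s : Finset α} {g : α → β} {ℓ : ℕ} {q : Fin ℓ → β}

lemma card_eq_of_image_eq_image_univ [DecidableEq β] (hg : Set.InjOn g s)
    (hq : Function.Injective q) (h : s.image g = univ.image q) : #s = ℓ := by
  rw [← card_image_of_injOn hg, h, card_image_of_injective _ hq, card_univ, Fintype.card_fin]

lemma card_filter_le_of_image_eq_image_univ [LinearOrder α] [LinearOrder β]
    (hg : StrictMonoOn g s) (hq : StrictMono q) (h : s.image g = univ.image q)
    {x : α} (hx : x ∈ s) {r : Fin ℓ} (hxr : g x = q r) :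
    #{y ∈ s | y ≤ x} = r + 1 := by
  have himage : {y ∈ s | y ≤ x}.image g = (Iic r).image q := by
    ext z
    simp only [mem_image, mem_filter, mem_Iic]
    constructor
    · rintro ⟨y, ⟨hys, hyx⟩, rfl⟩
      obtain ⟨r', -, hr'⟩ := mem_image.1 (h ▸ mem_image_of_mem g hys)
      refine ⟨r', ?_, hr'⟩
      rw [← hq.le_iff_le, hr', ← hxr]
      exact hg.monotoneOn hys hx hyx
    · rintro ⟨r', hr'r, rfl⟩
      obtain ⟨y, hys, hy⟩ := mem_image.1 (h ▸ mem_image_of_mem q (mem_univ r'))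
      refine ⟨y, ⟨hys, ?_⟩, hy⟩
      rw [← hg.le_iff_le hys hx, hy, hxr]
      exact hq.monotone hr'r
  rw [← card_image_of_injOn (hg.injOn.mono (filter_subset _ s)), himage,
    card_image_of_injective _ hq.injective, Fin.card_Iic]

end Enumeration

section PartialWeight

variable {V : Type*} (w : V → ℕ) {n : ℕ} (Q : Fin n → Finset V)

lemma partialW_zero : partialW w Q 0 = 0 := by
  simp [partialW]

lemma partialW_succ {m : ℕ} (hm : m < n) :
    partialW w Q (m + 1) = partialW w Q m + ∑ v ∈ Q ⟨m, hm⟩, w v := by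
  have h : univ.filter (fun i : Fin n => (i : ℕ) < m + 1)
      = insert ⟨m, hm⟩ (univ.filter fun i : Fin n => (i : ℕ) < m) := by
    ext i
    simp only [mem_filter, mem_univ, true_and, mem_insert, Fin.ext_iff]
    omega
  rw [partialW, h, sum_insert (by simp), add_comm]
  rfl

lemma partialW_succ_of_le {m : ℕ} (hm : n ≤ m) : partialW w Q (m + 1) = partialW w Q m := by
  simp only [partialW]
  congr 1
  ext i
  simp only [mem_filter, mem_univ, true_and]
  omega

lemma partialW_succ_div {k : ℕ} (hfit : ∀ i, ∑ v ∈ Q i, w v < k) (m : ℕ) :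
    partialW w Q (m + 1) / k = partialW w Q m / k ∨
      partialW w Q (m + 1) / k = partialW w Q m / k + 1 := by
  rcases lt_or_ge m n with hm | hm
  · rw [partialW_succ w Q hm]
    exact Nat.div_eq_or_eq_add_one_of_le_of_lt_add (Nat.le_add_right _ _)
      (Nat.add_lt_add_left (hfit _) _)
  · rw [partialW_succ_of_le w Q hm]
    exact Or.inl rfl

end PartialWeight

theorem critical_sequence_landmarks_general {V : Type*}
    (k : ℕ) (hk : 1 ≤ k) (w : V → ℕ)
    (n : ℕ) (Q : Fin n → Finset V)
    (hfit : ∀ i, ∑ v ∈ Q i, w v < k)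
    (hcrit : ∀ j : ℕ, 1 ≤ j → j + 1 ≤ n → ¬ (NonJump k w Q j ∧ NonJump k w Q (j + 1)))
    (ℓ : ℕ) (q : Fin ℓ → ℕ)
    (hqmono : StrictMono q)
    (hland : ∀ m : ℕ,
      (∃ j : ℕ, 1 ≤ j ∧ j ≤ n ∧ NonJump k w Q j ∧ partialW w Q j / k = m) ↔
        ∃ r : Fin ℓ, q r = m) :
    ℓ + partialW w Q n / k = n ∧
      ∀ r : Fin ℓ, q r * k ≤ partialW w Q (q r + ((r : ℕ) + 1)) ∧
        partialW w Q (q r + ((r : ℕ) + 1)) < (q r + 1) * k := by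
  set f : ℕ → ℕ := fun m => partialW w Q m / k with hf
  have hstep : ∀ m, f (m + 1) = f m ∨ f (m + 1) = f m + 1 := partialW_succ_div w Q hfit
  have hf0 : f 0 = 0 := by simp [hf, partialW_zero]
  set J := {j ∈ Icc 1 n | f j = f (j - 1)} with hJ
  have hmono : StrictMonoOn f J := strictMonoOn_filter_flat hstep hcrit
  have himage : J.image f = univ.image q := by
    ext m
    simpa [hJ, NonJump, and_assoc] using hland m
  refine ⟨?_, fun r => ?_⟩
  · change ℓ + f n = n
    have := add_card_filter_flat_eq hstep n
    rw [← hJ, card_eq_of_image_eq_image_univ hmono.injOn hqmono.injective himage] at this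
    omega
  obtain ⟨j, hjJ, hjr⟩ := mem_image.1 (himage ▸ mem_image_of_mem q (mem_univ r))
  have hprefix : {x ∈ J | x ≤ j} = {x ∈ Icc 1 j | f x = f (x - 1)} := by
    ext x
    simp only [hJ, mem_filter, mem_Icc]
    grind
  have hj : q r + (r + 1) = j := by
    have hcount := add_card_filter_flat_eq hstep j
    rw [← hprefix, card_filter_le_of_image_eq_image_univ hmono hqmono himage hjJ hjr] at hcount
    omega
  rw [hj, ← hjr]
  exact ⟨Nat.div_mul_le_self _ _, (Nat.div_lt_iff_lt_mul hk).1 (Nat.lt_succ_self _)⟩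

/-- Let `(Q_1, …, Q_n)` be a critical fit sequence of a finite weighted set `P` (weights
in `{0,…,k−1}`, each term nonempty of weight `< k`, no two consecutive non-jumps), and
let `0 = q_1 < q_2 < … < q_ℓ ≤ ⌊w(P)/k⌋` be its landmarks (the values `⌊w_j/k⌋` at the
non-jumps `j`).  Then `ℓ = n − ⌊w(P)/k⌋` and for every `r ∈ [ℓ]`,
`q_r·k ≤ w(Q_1 ∪ … ∪ Q_{q_r + r}) < (q_r + 1)·k`. -/
theorem critical_sequence_landmarks {V : Type*} [DecidableEq V]
    (k : ℕ) (hk : 1 ≤ k) (P : Finset V) (w : V → ℕ) (hw : ∀ v ∈ P, w v < k)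
    (n : ℕ) (hn : 1 ≤ n) (Q : Fin n → Finset V)
    (hne : ∀ i, (Q i).Nonempty)
    (hdisj : ∀ i j, i ≠ j → Disjoint (Q i) (Q j))
    (hunion : Finset.univ.biUnion Q = P)
    (hfit : ∀ i, ∑ v ∈ Q i, w v < k)
    (hcrit : ∀ j : ℕ, 1 ≤ j → j + 1 ≤ n → ¬ (NonJump k w Q j ∧ NonJump k w Q (j + 1)))
    (ℓ : ℕ) (hℓ : 0 < ℓ) (q : Fin ℓ → ℕ)
    (hq0 : q ⟨0, hℓ⟩ = 0) (hqmono : StrictMono q)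
    (hqle : ∀ r, q r ≤ partialW w Q n / k)
    (hland : ∀ m : ℕ,
      (∃ j : ℕ, 1 ≤ j ∧ j ≤ n ∧ NonJump k w Q j ∧ partialW w Q j / k = m) ↔
        ∃ r : Fin ℓ, q r = m) :
    ℓ + partialW w Q n / k = n ∧
      ∀ r : Fin ℓ, q r * k ≤ partialW w Q (q r + ((r : ℕ) + 1)) ∧
        partialW w Q (q r + ((r : ℕ) + 1)) < (q r + 1) * k :=
  critical_sequence_landmarks_general k hk w n Q hfit hcrit ℓ q hqmono hland
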